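/- Let c : ℝ^d × E → ℝ satisfy c(x,e) ≤ 0 for all (x,e), let γ : ℝ^d × E → ℝ^d, and suppose there exists α > 0 such that |x + γ(x,e)|² − |x|² > −α for all (x,e) and β := inf_{(x,e)} (−c(x,e))/(|x+γ(x,e)|² − |x|² + α) > 0. Then the function Λ(x) = β|x|² + ζ satisfies inf_{e ∈ E} [Λ(x) − Λ(x + γ(x,e)) − c(x,e)] ≥ αβ > 0 for all x ∈ ℝ^d and every constant ζ. -/
import Mathlib

theorem stmt_12 {E : Type*} (d : ℕ)
    (c : EuclideanSpace ℝ (Fin d) → E → ℝ)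
    (γ : EuclideanSpace ℝ (Fin d) → E → EuclideanSpace ℝ (Fin d))
    (hc : ∀ x e, c x e ≤ 0)
    (α : ℝ) (hα : 0 < α)
    (hγ : ∀ x e, -α < ‖x + γ x e‖^2 - ‖x‖^2)
    (β : ℝ) (hβpos : 0 < β)
    (hβ : ∀ x e, β ≤ (-c x e) / (‖x + γ x e‖^2 - ‖x‖^2 + α)) :
    (∀ (x : EuclideanSpace ℝ (Fin d)) (ζ : ℝ) (e : E),
      α * β ≤ (β * ‖x‖^2 + ζ) - (β * ‖x + γ x e‖^2 + ζ) - c x e) ∧ 0 < α * β := by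
  constructor
  · intro x ζ e
    have hpos : 0 < ‖x + γ x e‖^2 - ‖x‖^2 + α := by linarith [hγ x e]
    have h := (le_div_iff₀ hpos).mp (hβ x e)
    nlinarith
  · positivity
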